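/- arXiv:1607.06150 — 3 statements merged into one kernel-verified Lean document; each statement's English description precedes it below -/
import Mathlib

section
/- The derivative of the Catalan generating function satisfies c'(x) = c(x)³ / (2 − c(x)), i.e. (2 − c(x))·c'(x) = c(x)³, as an identity of formal power series. -/
/-- The generating function of the Catalan numbers `C_k = (1/(k+1)) * binom(2k,k)`
as a formal power series over `ℚ`. -/
noncomputable def catalanGF : PowerSeries ℚ :=
  PowerSeries.mk fun k => (Nat.choose (2 * k) k : ℚ) / (k + 1)

lemma catalanGF_eq : catalanGF = PowerSeries.mk fun k => (catalan k : ℚ) := by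
  ext k
  simp only [catalanGF, PowerSeries.coeff_mk]
  have h := succ_mul_catalan_eq_centralBinom k
  have h2 : ((k + 1 : ℕ) : ℚ) * (catalan k : ℚ) = (k.centralBinom : ℚ) := by
    exact_mod_cast congrArg (Nat.cast : ℕ → ℚ) h
  rw [Nat.centralBinom] at h2
  field_simp
  push_cast at h2 ⊢
  linarith [h2]

lemma catalanGF_rec : PowerSeries.X * catalanGF ^ 2 = catalanGF - 1 := by
  rw [catalanGF_eq]
  ext n
  rcases n with _ | n
  · simp
  · rw [sq, PowerSeries.coeff_succ_X_mul, PowerSeries.coeff_mul]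
    simp [catalan_succ']

/-- The derivative of the Catalan generating function satisfies
`(2 − c(x))·c'(x) = c(x)³`. -/
theorem catalanGF_derivative :
    (2 - catalanGF) * PowerSeries.derivative ℚ catalanGF = catalanGF ^ 3 := by
  have h := catalanGF_rec
  have hd := congrArg (PowerSeries.derivative ℚ) h
  simp only [map_sub, map_one, Derivation.leibniz, Derivation.map_one_eq_zero, PowerSeries.derivative_X, sq, smul_eq_mul, one_mul, mul_one, sub_zero] at hd
  set c := catalanGF
  set c' := PowerSeries.derivative ℚ c
  linear_combination (-c) * hd + 2 * c' * h
end

section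
/- The number of partitions π (listed weakly decreasingly) with at most k parts satisfying π_i ≤ k − i for all i equals the Catalan number C_k. -/
/-! We count partitions contained in a staircase via the "Catalan triangle"
(ballot number) recursion.  `Stair n m` is the type of weakly decreasing
functions `π : ℕ → ℕ` with `π i ≤ min m (n - (i+1))` (so at most `n` parts,
all parts `≤ m`, staircase-bounded).  We prove
`(n+1) * #Stair n m = (n+1-m) * C(n+m, m)` for `m ≤ n` and specialize at
`m = n`. -/

/-- Staircase partitions: at most `n` parts, all parts at most `m`, part `i`
(zero-based) at most `n - (i+1)`, encoded as functions `ℕ → ℕ`. -/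
def Stair (n m : ℕ) : Type :=
  {π : ℕ → ℕ // (∀ i j, i ≤ j → π j ≤ π i) ∧ ∀ i, π i ≤ min m (n - (i + 1))}

instance stairFinite (n m : ℕ) : Finite (Stair n m) := by
  have hinj : Function.Injective
      (fun π : Stair n m => (fun i : Fin n => (⟨π.1 i.1, by
        have := π.2.2 i.1; omega⟩ : Fin (m + 1)))) := by
    rintro ⟨π, hπ⟩ ⟨σ, hσ⟩ h
    simp only at h
    apply Subtype.ext; funext i
    show π i = σ i
    by_cases hi : i < n
    · exact congrArg Fin.val (congrFun h ⟨i, hi⟩)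
    · have h1 := hπ.2 i; have h2 := hσ.2 i; omega
  exact Finite.of_injective _ hinj

instance stairUnique (n : ℕ) : Unique (Stair n 0) where
  default := ⟨fun _ => 0, fun _ _ _ => le_refl 0, fun i => by simp⟩
  uniq := by
    rintro ⟨π, hπ⟩
    apply Subtype.ext; funext i
    show π i = 0
    have := hπ.2 i; omega

/-- prepend a part to a partition -/
def consF (a : ℕ) (τ : ℕ → ℕ) : ℕ → ℕ
  | 0 => a
  | j + 1 => τ j

/-- The ballot recursion: a staircase partition with parts `≤ m+1` either has
all parts `≤ m`, or has first part exactly `m+1` and its tail is a staircase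
partition for the smaller staircase. -/
def stairEquiv (n m : ℕ) (h : m + 1 ≤ n) :
    Stair (n + 1) (m + 1) ≃ Stair (n + 1) m ⊕ Stair n (m + 1) where
  toFun π :=
    if h0 : π.1 0 ≤ m then
      Sum.inl ⟨π.1, π.2.1, fun i => by
        have h1 := π.2.2 i
        have h2 := π.2.1 0 i (Nat.zero_le i)
        omega⟩
    else
      Sum.inr ⟨fun i => π.1 (i + 1), fun i j hij => π.2.1 (i + 1) (j + 1) (by omega),
        fun i => by
          show π.1 (i + 1) ≤ _
          have := π.2.2 (i + 1); omega⟩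
  invFun x :=
    match x with
    | Sum.inl π => ⟨π.1, π.2.1, fun i => by have := π.2.2 i; omega⟩
    | Sum.inr τ => ⟨consF (m + 1) τ.1,
        by
          intro i j hij
          match i, j with
          | 0, 0 => exact le_refl _
          | 0, j + 1 =>
            show τ.1 j ≤ m + 1
            have := τ.2.2 j; omega
          | i + 1, 0 => omega
          | i + 1, j + 1 => exact τ.2.1 i j (by omega),
        by
          intro i
          match i with
          | 0 => show m + 1 ≤ _; omega
          | i + 1 =>
            show τ.1 i ≤ _
            have := τ.2.2 i; omega⟩
  left_inv π := by
    by_cases h0 : π.1 0 ≤ m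
    · simp only [dif_pos h0]
      exact Subtype.ext rfl
    · simp only [dif_neg h0]
      have hb := π.2.2 0
      apply Subtype.ext; funext i
      show consF (m + 1) (fun i => π.1 (i + 1)) i = π.1 i
      match i with
      | 0 => show m + 1 = π.1 0; omega
      | i + 1 => rfl
  right_inv x := by
    rcases x with π | τ
    · have h0 : π.1 0 ≤ m := by have := π.2.2 0; omega
      dsimp only
      split
      · exact congrArg Sum.inl (Subtype.ext rfl)
      · exact absurd h0 (by assumption)
    · have h0 : ¬ (consF (m + 1) τ.1 0 ≤ m) := by show ¬ (m + 1 ≤ m); omega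
      dsimp only
      split
      · exact absurd (by assumption) h0
      · exact congrArg Sum.inr (Subtype.ext rfl)

/-- The bound `m` is immaterial once `m ≥ n`. -/
def stairSat (n : ℕ) : Stair (n + 1) (n + 1) ≃ Stair (n + 1) n where
  toFun π := ⟨π.1, π.2.1, fun i => by have := π.2.2 i; omega⟩
  invFun π := ⟨π.1, π.2.1, fun i => by have := π.2.2 i; omega⟩
  left_inv π := Subtype.ext rfl
  right_inv π := Subtype.ext rfl

lemma stair_card_formula : ∀ n m : ℕ, m ≤ n →
    ((n : ℚ) + 1) * Nat.card (Stair n m) =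
      ((n : ℚ) + 1 - m) * ((n + m).choose m : ℚ) := by
  intro n
  induction n with
  | zero =>
    intro m hm
    interval_cases m
    simp [Nat.card_unique]
  | succ n ihn =>
    intro m
    induction m with
    | zero => intro _; simp [Nat.card_unique]
    | succ m ihm =>
      intro hm1
      rcases Nat.lt_or_ge (m + 1) (n + 1) with hlt | hge
      · -- m + 1 ≤ n
        have h : m + 1 ≤ n := by omega
        have hcard : (Nat.card (Stair (n + 1) (m + 1)) : ℚ) =
            (Nat.card (Stair (n + 1) m) : ℚ) + (Nat.card (Stair n (m + 1)) : ℚ) := by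
          rw [Nat.card_congr (stairEquiv n m h), Nat.card_sum]
          push_cast; ring
        have e1 := ihm (by omega)
        have e2 := ihn (m + 1) h
        have pascal : ((n + m + 2).choose (m + 1) : ℚ) =
            ((n + m + 1).choose m : ℚ) + ((n + m + 1).choose (m + 1) : ℚ) := by
          have := Nat.choose_succ_succ' (n + m + 1) m
          exact_mod_cast congrArg (Nat.cast : ℕ → ℚ) this
        have ratio : ((n + m + 1).choose (m + 1) : ℚ) * (m + 1) =
            ((n + m + 1).choose m : ℚ) * (n + 1) := by
          have := Nat.choose_succ_right_eq (n + m + 1) m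
          have h2 : n + m + 1 - m = n + 1 := by omega
          rw [h2] at this
          exact_mod_cast congrArg (Nat.cast : ℕ → ℚ) this
        have hn1 : ((n : ℚ) + 1) ≠ 0 := by positivity
        apply mul_left_cancel₀ hn1
        have hcast1 : ((n + 1 : ℕ) : ℚ) = (n : ℚ) + 1 := by push_cast; ring
        have hcast2 : (((n + 1) + (m + 1)) : ℕ) = n + m + 2 := by omega
        have hcast3 : (((n + 1) + m) : ℕ) = n + m + 1 := by omega
        have hcast4 : ((n + (m + 1)) : ℕ) = n + m + 1 := by omega
        rw [hcast2] at *
        rw [hcast3] at e1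
        rw [hcast4] at e2
        push_cast at e1 e2 ⊢
        rw [hcard]
        linear_combination ((n : ℚ) + 1) * e1 + ((n : ℚ) + 2) * e2 - ratio -
          ((n : ℚ) + 1) * ((n : ℚ) + 1 - (m : ℚ)) * pascal
      · -- m = n
        obtain rfl : n = m := by omega
        have hcard : (Nat.card (Stair (n + 1) (n + 1)) : ℚ) =
            (Nat.card (Stair (n + 1) n) : ℚ) := by
          rw [Nat.card_congr (stairSat n)]
        have e1 := ihm (by omega)
        have hch : ((n + 1 + (n + 1)).choose (n + 1) : ℕ) = 2 * ((n + 1 + n).choose n) := by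
          have p : (n + 1 + (n + 1)).choose (n + 1) =
              (n + 1 + n).choose n + (n + 1 + n).choose (n + 1) :=
            Nat.choose_succ_succ' (n + 1 + n) n
          have s : (n + 1 + n).choose (n + 1) = (n + 1 + n).choose n := by
            have := Nat.choose_symm (n := n + 1 + n) (k := n + 1) (by omega)
            have h2 : n + 1 + n - (n + 1) = n := by omega
            rw [h2] at this
            omega
          omega
        have hchq : ((n + 1 + (n + 1)).choose (n + 1) : ℚ) =
            2 * ((n + 1 + n).choose n : ℚ) := by
          exact_mod_cast congrArg (Nat.cast : ℕ → ℚ) hch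
        rw [hcard]
        push_cast at e1 ⊢
        linear_combination e1 - hchq

/-- Staircase partitions as functions on `ℕ` agree with the `Fin k` encoding. -/
def stairRestrict (k : ℕ) :
    Stair k k ≃ {π : Fin k → ℕ //
      (∀ i j, i ≤ j → π j ≤ π i) ∧ ∀ i : Fin k, π i ≤ k - ((i : ℕ) + 1)} where
  toFun π := ⟨fun i => π.1 i.1,
    fun i j hij => π.2.1 i.1 j.1 hij,
    fun i => by show π.1 i.1 ≤ _; have := π.2.2 i.1; omega⟩
  invFun σ := ⟨fun i => if h : i < k then σ.1 ⟨i, h⟩ else 0,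
    by
      intro i j hij
      by_cases hi : i < k
      · by_cases hj : j < k
        · simp only [dif_pos hi, dif_pos hj]
          exact σ.2.1 ⟨i, hi⟩ ⟨j, hj⟩ hij
        · simp only [dif_pos hi, dif_neg hj]
          exact Nat.zero_le _
      · have hj : ¬ j < k := by omega
        simp only [dif_neg hi, dif_neg hj]
        exact le_refl _,
    by
      intro i
      by_cases hi : i < k
      · simp only [dif_pos hi]
        have := σ.2.2 ⟨i, hi⟩
        simp only at this
        omega
      · simp only [dif_neg hi]
        omega⟩
  left_inv π := by
    apply Subtype.ext; funext i
    show (if h : i < k then π.1 i else 0) = π.1 i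
    by_cases hi : i < k
    · rw [dif_pos hi]
    · rw [dif_neg hi]
      have := π.2.2 i
      omega
  right_inv σ := by
    apply Subtype.ext; funext i
    show (if h : (i : ℕ) < k then σ.1 ⟨i, h⟩ else 0) = σ.1 i
    rw [dif_pos i.2]

/-- The number of partitions with at most `k` parts (weakly decreasing, zero-based
index `i` giving the `(i+1)`-st part) contained in the staircase `π_i ≤ k − i`
equals the Catalan number `C_k = (1/(k+1))·binom(2k,k)`. -/
theorem card_staircase_partitions (k : ℕ) :
    (Nat.card {π : Fin k → ℕ //
        (∀ i j, i ≤ j → π j ≤ π i) ∧ ∀ i : Fin k, π i ≤ k - ((i : ℕ) + 1)} : ℚ) =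
      (Nat.choose (2 * k) k : ℚ) / (k + 1) := by
  have h := stair_card_formula k k (le_refl k)
  rw [Nat.card_congr (stairRestrict k)] at h
  have h2 : ((k : ℚ) + 1) ≠ 0 := by positivity
  have h3 : k + k = 2 * k := by omega
  rw [h3] at h
  field_simp
  linear_combination h
end

section
/- With F(x,y) = c(x²)/(1 − x y c(x²)) and c = c(x²) the Catalan generating function, the generating function G(x,y,z) for nonnegative Dyck paths from (0,j₁) to (i,j₂) (weighted x^i y^{j₁} z^{j₂}) satisfies G(x,y,z) = F(x,y)·F(x,z) / (c(x²)·(1 − yz)). -/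
/-!
Write `P(i, a, b)` for the number of nonnegative paths of length `i` from height `a` to
height `b`, computed by splitting off the first step. Two identities, proved together by
induction on `i`, are a form of the reflection principle: `P(i, a+1, b+1) = P(i, a, b) +
P(i, a+b+2, 0)` and `P(i, 0, b) = P(i, b, 0)`. They say `G·(1 - yz) = W` with
`W = Σ P(i, a+b, 0) xⁱ yᵃ zᵇ`. Cutting a path from `m + 1` down to `0` at its first visit to
height `m` gives `P(i+1, m+1, 0) = Σₙ P(n, 0, 0) P(i-n, m, 0)`, and `P(n, 0, 0)` is the
coefficient of `xⁿ` in `c(x²)`. So the paths from `m` down to `0` have generating function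
`c·(xc)ᵐ`, and summing over `m = a + b` gives `W = c / ((1 - xyc)(1 - xzc))`.
-/

open MvPowerSeries in
/-- `c(x²)` as a three-variable formal power series (variables `x = X 0`, `y = X 1`,
`z = X 2`), where `c` is the Catalan generating function. -/
noncomputable def catalanX2 : MvPowerSeries (Fin 3) ℚ :=
  fun d =>
    if d 1 = 0 ∧ d 2 = 0 ∧ d 0 % 2 = 0 then
      (Nat.choose (d 0) (d 0 / 2) : ℚ) / (d 0 / 2 + 1)
    else 0

/-- The generating function `G(x,y,z) = Σ #P(i,j₁,j₂) x^i y^{j₁} z^{j₂}` counting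
nonnegative Dyck paths from `(0,j₁)` to `(i,j₂)`: `i` steps `±1` starting at height
`j₁`, ending at height `j₂`, all intermediate heights `≥ 0`. -/
noncomputable def Ggf : MvPowerSeries (Fin 3) ℚ :=
  fun d =>
    (Nat.card {p : Fin (d 0) → ℤ //
        (∀ i, p i = 1 ∨ p i = -1) ∧
        (∀ j : Fin (d 0), 0 ≤ (d 1 : ℤ) + ∑ i ∈ Finset.univ.filter (· ≤ j), p i) ∧
        (d 1 : ℤ) + ∑ i, p i = (d 2 : ℤ)} : ℚ)

open MvPowerSeries in
/-- `F(x,y)` with `F` the Dyck-path generating function `c(x²)/(1 − x y c(x²))`. -/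
noncomputable def Fxy : MvPowerSeries (Fin 3) ℚ :=
  catalanX2 * (1 - X 0 * X 1 * catalanX2)⁻¹

open MvPowerSeries in
/-- `F(x,z)`. -/
noncomputable def Fxz : MvPowerSeries (Fin 3) ℚ :=
  catalanX2 * (1 - X 0 * X 2 * catalanX2)⁻¹

open Finset

def pathCount : ℕ → ℕ → ℕ → ℕ
  | 0, a, b => if a = b then 1 else 0
  | i + 1, 0, b => pathCount i 1 b
  | i + 1, a + 1, b => pathCount i (a + 2) b + pathCount i a b

theorem pathCount_zero (a b : ℕ) : pathCount 0 a b = if a = b then 1 else 0 := rfl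

theorem pathCount_succ_zero (i b : ℕ) : pathCount (i + 1) 0 b = pathCount i 1 b := rfl

theorem pathCount_succ_succ (i a b : ℕ) :
    pathCount (i + 1) (a + 1) b = pathCount i (a + 2) b + pathCount i a b := rfl

private theorem pathCount_add_one_add_one_and_zero_left (i : ℕ) :
    (∀ a b, pathCount i (a + 1) (b + 1) = pathCount i a b + pathCount i (a + b + 2) 0) ∧
      ∀ b, pathCount i 0 b = pathCount i b 0 := by
  induction i with
  | zero =>
    exact ⟨fun a b => by simp [pathCount_zero], fun b => by simp [pathCount_zero, eq_comm]⟩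
  | succ i ih =>
    obtain ⟨hstep, hsymm⟩ := ih
    refine ⟨fun a b => ?_, fun b => ?_⟩
    · rcases a with _ | a
      · rw [pathCount_succ_succ, pathCount_succ_zero, hstep, hsymm, pathCount_succ_succ]
        ring_nf
      · rw [pathCount_succ_succ, pathCount_succ_succ, pathCount_succ_succ, hstep, hstep]
        ring_nf
    · rcases b with _ | b
      · rfl
      · rw [pathCount_succ_zero, pathCount_succ_succ, hstep, hsymm]
        ring_nf

theorem pathCount_add_one_add_one (i a b : ℕ) :
    pathCount i (a + 1) (b + 1) = pathCount i a b + pathCount i (a + b + 2) 0 :=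
  (pathCount_add_one_add_one_and_zero_left i).1 a b

theorem pathCount_zero_left (i b : ℕ) : pathCount i 0 b = pathCount i b 0 :=
  (pathCount_add_one_add_one_and_zero_left i).2 b

theorem pathCount_succ_succ_zero_eq_sum (i m : ℕ) :
    pathCount (i + 1) (m + 1) 0 =
      ∑ n ∈ range (i + 1), pathCount n 0 0 * pathCount (i - n) m 0 := by
  induction i generalizing m with
  | zero => rcases m with _ | m <;> rfl
  | succ i ih =>
    have hpeel : ∀ n ∈ range (i + 1), pathCount n 0 0 * pathCount (i + 1 - n) m 0 =
        pathCount n 0 0 * pathCount (i - n + 1) m 0 := by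
      intro n hn
      rw [Nat.sub_add_comm (mem_range_succ_iff.1 hn)]
    rw [sum_range_succ, sum_congr rfl hpeel, Nat.sub_self, pathCount_succ_succ]
    rcases m with _ | m
    · simp [pathCount_succ_zero, ih, pathCount_zero]
    · rw [show m + 1 + 2 = m + 2 + 1 from rfl, ih, ih]
      simp [pathCount_succ_succ, mul_add, sum_add_distrib, pathCount_zero]

theorem sum_range_two_mul_add_one_eq_sum_even {M : Type*} [AddCommMonoid M] (f : ℕ → M)
    (hf : ∀ k, Odd k → f k = 0) (m : ℕ) :
    ∑ k ∈ range (2 * m + 1), f k = ∑ j ∈ range (m + 1), f (2 * j) := by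
  induction m with
  | zero => simp
  | succ m ih =>
    rw [show 2 * (m + 1) + 1 = 2 * m + 1 + 1 + 1 by ring, sum_range_succ, sum_range_succ, ih,
      hf (2 * m + 1) (odd_two_mul_add_one m), add_zero, sum_range_succ _ (m + 1)]
    rfl

def aeratedCatalan (n : ℕ) : ℕ := if Even n then catalan (n / 2) else 0

theorem aeratedCatalan_of_odd {n : ℕ} (hn : Odd n) : aeratedCatalan n = 0 := by
  simp [aeratedCatalan, Nat.not_even_iff_odd.2 hn]

theorem aeratedCatalan_two_mul (m : ℕ) : aeratedCatalan (2 * m) = catalan m := by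
  simp [aeratedCatalan]

theorem aeratedCatalan_add_two (n : ℕ) :
    aeratedCatalan (n + 2) = ∑ k ∈ range (n + 1), aeratedCatalan k * aeratedCatalan (n - k) := by
  rcases Nat.even_or_odd' n with ⟨m, rfl | rfl⟩
  · rw [sum_range_two_mul_add_one_eq_sum_even _
        (fun k hk => by rw [aeratedCatalan_of_odd hk, zero_mul]),
      show 2 * m + 2 = 2 * (m + 1) by ring, aeratedCatalan_two_mul, catalan_succ',
      Nat.sum_antidiagonal_eq_sum_range_succ_mk]
    refine sum_congr rfl fun j _ => ?_
    rw [← mul_tsub, aeratedCatalan_two_mul, aeratedCatalan_two_mul]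
  · rw [show 2 * m + 1 + 2 = 2 * (m + 1) + 1 by ring,
      aeratedCatalan_of_odd (odd_two_mul_add_one _)]
    refine (sum_eq_zero fun k hk => ?_).symm
    rcases Nat.even_or_odd k with hk_even | hk_odd
    · rw [aeratedCatalan_of_odd (Nat.Odd.sub_even (by grind) (odd_two_mul_add_one m) hk_even),
        mul_zero]
    · rw [aeratedCatalan_of_odd hk_odd, zero_mul]

theorem pathCount_zero_zero (n : ℕ) : pathCount n 0 0 = aeratedCatalan n := by
  induction n using Nat.strong_induction_on with
  | _ n ih =>
    match n with
    | 0 => simp [pathCount_zero, aeratedCatalan]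
    | 1 => rw [aeratedCatalan_of_odd odd_one]; rfl
    | n + 2 =>
      rw [pathCount_succ_zero, pathCount_succ_succ_zero_eq_sum, aeratedCatalan_add_two]
      refine sum_congr rfl fun k hk => ?_
      rw [ih k (by grind), ih (n - k) (by grind)]

def IsNonnegPath {n : ℕ} (a b : ℤ) (p : Fin n → ℤ) : Prop :=
  (∀ i, p i = 1 ∨ p i = -1) ∧
    (∀ j : Fin n, 0 ≤ a + ∑ i ∈ univ.filter (· ≤ j), p i) ∧ a + ∑ i, p i = b

abbrev NonnegPath (n : ℕ) (a b : ℤ) : Type := {p : Fin n → ℤ // IsNonnegPath a b p}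

theorem Fin.sum_filter_le_zero {M : Type*} [AddCommMonoid M] {n : ℕ} (p : Fin (n + 1) → M) :
    ∑ i ∈ univ.filter (· ≤ (0 : Fin (n + 1))), p i = p 0 := by
  rw [filter_congr fun i _ => Fin.le_zero_iff, filter_eq', if_pos (mem_univ _), sum_singleton]

theorem Fin.sum_filter_le_succ {M : Type*} [AddCommMonoid M] {n : ℕ} (p : Fin (n + 1) → M)
    (j : Fin n) :
    ∑ i ∈ univ.filter (· ≤ j.succ), p i = p 0 + ∑ i ∈ univ.filter (· ≤ j), p i.succ := by
  simp [sum_filter, Fin.sum_univ_succ, Fin.succ_le_succ_iff]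

theorem isNonnegPath_cons_iff {n : ℕ} {a b s : ℤ} {q : Fin n → ℤ} :
    IsNonnegPath a b (Fin.cons s q : Fin (n + 1) → ℤ) ↔
      (s = 1 ∨ s = -1) ∧ 0 ≤ a + s ∧ IsNonnegPath (a + s) b q := by
  simp only [IsNonnegPath, Fin.forall_fin_succ, Fin.sum_filter_le_zero, Fin.sum_filter_le_succ,
    Fin.sum_cons, Fin.cons_zero, Fin.cons_succ, add_assoc]
  tauto

theorem card_nonnegPath_zero (a b : ℤ) :
    Nat.card (NonnegPath 0 a b) = if a = b then 1 else 0 := by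
  have h (p : Fin 0 → ℤ) : IsNonnegPath a b p ↔ a = b := by simp [IsNonnegPath]
  rw [Nat.card_congr (Equiv.subtypeEquivRight h)]
  split_ifs with hab <;> simp [hab]

instance {n : ℕ} {a b : ℤ} : Finite (NonnegPath n a b) :=
  Finite.of_injective (fun p i => p.1 i = 1) fun p q h => Subtype.ext <| funext fun i => by
    have := congrFun h i
    rcases p.2.1 i with hp | hp <;> rcases q.2.1 i with hq | hq <;> simp_all

def NonnegPath.cons {n : ℕ} {a b s : ℤ} (hs : s = 1 ∨ s = -1) (ha : 0 ≤ a + s)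
    (q : NonnegPath n (a + s) b) : NonnegPath (n + 1) a b :=
  ⟨Fin.cons s q.1, isNonnegPath_cons_iff.2 ⟨hs, ha, q.2⟩⟩

theorem NonnegPath.exists_eq_cons {n : ℕ} {a b : ℤ} (p : NonnegPath (n + 1) a b) :
    ∃ (s : ℤ) (hs : s = 1 ∨ s = -1) (ha : 0 ≤ a + s) (q : NonnegPath n (a + s) b),
      p = NonnegPath.cons hs ha q := by
  obtain ⟨p, hp⟩ := p
  rw [← Fin.cons_self_tail p, isNonnegPath_cons_iff] at hp
  exact ⟨p 0, hp.1, hp.2.1, ⟨Fin.tail p, hp.2.2⟩, Subtype.ext (Fin.cons_self_tail p).symm⟩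

theorem card_nonnegPath_succ_of_pos {n : ℕ} {a b : ℤ} (ha : 0 < a) :
    Nat.card (NonnegPath (n + 1) a b) =
      Nat.card (NonnegPath n (a + 1) b) + Nat.card (NonnegPath n (a - 1) b) := by
  rw [← Nat.card_sum]
  refine (Nat.card_eq_of_bijective (Sum.elim (NonnegPath.cons (Or.inl rfl) (by omega))
    (NonnegPath.cons (Or.inr rfl) (by omega))) ⟨?_, fun p => ?_⟩).symm
  · rintro (q | q) (q' | q') h <;>
      simp_all [NonnegPath.cons, Subtype.ext_iff]
  · obtain ⟨s, hs | hs, ha, q, rfl⟩ := p.exists_eq_cons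
    · subst hs; exact ⟨Sum.inl q, rfl⟩
    · subst hs; exact ⟨Sum.inr q, rfl⟩

theorem card_nonnegPath_succ_zero {n : ℕ} {b : ℤ} :
    Nat.card (NonnegPath (n + 1) 0 b) = Nat.card (NonnegPath n 1 b) := by
  refine (Nat.card_eq_of_bijective (NonnegPath.cons (Or.inl rfl) zero_le_one)
    ⟨?_, fun p => ?_⟩).symm
  · intro q q' h
    simpa [NonnegPath.cons, Subtype.ext_iff] using h
  · obtain ⟨s, hs | hs, ha, q, rfl⟩ := p.exists_eq_cons
    · subst hs; exact ⟨q, rfl⟩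
    · omega

theorem card_nonnegPath (i a b : ℕ) : Nat.card (NonnegPath i a b) = pathCount i a b := by
  induction i generalizing a with
  | zero => simp [card_nonnegPath_zero, pathCount_zero]
  | succ i ih =>
    rcases a with _ | a
    · rw [Nat.cast_zero, card_nonnegPath_succ_zero, ← Nat.cast_one, ih, pathCount_succ_zero]
    · rw [card_nonnegPath_succ_of_pos (by positivity), pathCount_succ_succ, ← ih, ← ih]
      congr 3; push_cast; ring

open MvPowerSeries

theorem coeff_mul_X_mul_X {σ R : Type*} [CommSemiring R] [DecidableEq σ]
    (φ : MvPowerSeries σ R) {s t : σ} (hst : s ≠ t) (d : σ →₀ ℕ) :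
    coeff d (φ * (X s * X t)) =
      if 1 ≤ d s ∧ 1 ≤ d t then coeff (d - Finsupp.single s 1 - Finsupp.single t 1) φ else 0 := by
  have hle : Finsupp.single s 1 + Finsupp.single t 1 ≤ d ↔ 1 ≤ d s ∧ 1 ≤ d t := by
    refine ⟨fun h => ⟨?_, ?_⟩, fun h u => ?_⟩
    · simpa [hst] using h s
    · simpa [hst.symm] using h t
    · by_cases hu : u = s <;> by_cases hu' : u = t <;> simp_all
  rw [X_def, X_def, monomial_mul_monomial, coeff_mul_monomial]
  simp only [hle, mul_one, tsub_tsub]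

theorem coeff_catalanX2 (d : Fin 3 →₀ ℕ) :
    coeff d catalanX2 = if d 1 = 0 ∧ d 2 = 0 then (pathCount (d 0) 0 0 : ℚ) else 0 := by
  rw [coeff_apply, pathCount_zero_zero]
  unfold catalanX2
  rcases Nat.even_or_odd' (d 0) with ⟨k, hk | hk⟩
  · have hcat : (Nat.choose (2 * k) k : ℚ) / (k + 1) = catalan k := by
      rw [← Nat.centralBinom_eq_two_mul_choose, ← succ_mul_catalan_eq_centralBinom]
      push_cast
      field_simp
    simp [hk, aeratedCatalan_two_mul, hcat]
  · simp [hk, aeratedCatalan_of_odd (odd_two_mul_add_one k), Nat.add_mod]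

theorem coeff_mul_catalanX2 (φ : MvPowerSeries (Fin 3) ℚ) (d : Fin 3 →₀ ℕ) :
    coeff d (φ * catalanX2) =
      ∑ n ∈ range (d 0 + 1), coeff (d - Finsupp.single 0 n) φ * pathCount n 0 0 := by
  classical
  have hsub : (range (d 0 + 1)).image (fun n => (d - Finsupp.single 0 n, Finsupp.single 0 n))
      ⊆ antidiagonal d := by
    intro p hp
    obtain ⟨n, hn, rfl⟩ := mem_image.1 hp
    rw [HasAntidiagonal.mem_antidiagonal]
    exact tsub_add_cancel_of_le (Finsupp.single_le_iff.2 (Nat.lt_succ_iff.1 (mem_range.1 hn)))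
  have hvanish : ∀ p ∈ antidiagonal d, p ∉ (range (d 0 + 1)).image
      (fun n => (d - Finsupp.single 0 n, Finsupp.single 0 n)) →
        coeff p.1 φ * coeff p.2 catalanX2 = 0 := by
    rintro ⟨p₁, p₂⟩ hp hnot
    rw [HasAntidiagonal.mem_antidiagonal] at hp
    rw [coeff_catalanX2]
    split_ifs with h
    · refine absurd (mem_image.2 ⟨p₂ 0, ?_, ?_⟩) hnot
      · have := congrArg (· 0) hp
        simp only [Finsupp.add_apply] at this
        exact mem_range.2 (by omega)
      · have hp₂ : Finsupp.single 0 (p₂ 0) = p₂ := by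
          ext i; fin_cases i <;> simp [h.1, h.2]
        rw [hp₂, ← hp, add_tsub_cancel_right]
    · rw [mul_zero]
  rw [coeff_mul, ← sum_subset hsub hvanish, sum_image]
  · refine sum_congr rfl fun n _ => ?_
    rw [coeff_catalanX2]
    simp
  · intro m _ n _ h
    exact Finsupp.single_injective 0 (congrArg Prod.snd h)

theorem coeff_Ggf (d : Fin 3 →₀ ℕ) : coeff d Ggf = pathCount (d 0) (d 1) (d 2) := by
  rw [← card_nonnegPath]
  rfl

noncomputable def returnSeriesYZ : MvPowerSeries (Fin 3) ℚ :=
  fun d => pathCount (d 0) (d 1 + d 2) 0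

noncomputable def returnSeriesZ : MvPowerSeries (Fin 3) ℚ :=
  fun d => if d 1 = 0 then pathCount (d 0) (d 2) 0 else 0

theorem coeff_returnSeriesYZ (d : Fin 3 →₀ ℕ) :
    coeff d returnSeriesYZ = pathCount (d 0) (d 1 + d 2) 0 := rfl

theorem coeff_returnSeriesZ (d : Fin 3 →₀ ℕ) :
    coeff d returnSeriesZ = if d 1 = 0 then (pathCount (d 0) (d 2) 0 : ℚ) else 0 := rfl

theorem Ggf_mul_one_sub_X_mul_X : Ggf * (1 - X 1 * X 2) = returnSeriesYZ := by
  ext d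
  rw [mul_one_sub, map_sub, coeff_mul_X_mul_X _ (by decide), coeff_Ggf, coeff_Ggf,
    coeff_returnSeriesYZ]
  simp only [Finsupp.tsub_apply, Finsupp.single_apply, Fin.reduceEq, if_false, if_true, tsub_zero]
  generalize d 0 = i, d 1 = a, d 2 = b
  rcases a with _ | a <;> rcases b with _ | b
  · simp
  · simp [pathCount_zero_left]
  · simp
  · rw [pathCount_add_one_add_one, show a + 1 + (b + 1) = a + b + 2 by ring]
    simp

theorem returnSeriesYZ_mul_one_sub :
    returnSeriesYZ * (1 - X 0 * X 1 * catalanX2) = returnSeriesZ := by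
  ext d
  rw [mul_one_sub, map_sub, show returnSeriesYZ * (X 0 * X 1 * catalanX2) =
    returnSeriesYZ * catalanX2 * (X 0 * X 1) by ring, coeff_mul_X_mul_X _ (by decide),
    coeff_mul_catalanX2, coeff_returnSeriesYZ, coeff_returnSeriesZ]
  simp only [coeff_returnSeriesYZ, Finsupp.tsub_apply, Finsupp.single_apply, Fin.reduceEq,
    if_false, if_true, tsub_zero]
  generalize d 0 = i, d 1 = a, d 2 = b
  rcases a with _ | a
  · simp
  rcases i with _ | i
  · simp [pathCount_zero]
  · simp [add_right_comm a 1 b, pathCount_succ_succ_zero_eq_sum, mul_comm]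

theorem returnSeriesZ_mul_one_sub : returnSeriesZ * (1 - X 0 * X 2 * catalanX2) = catalanX2 := by
  ext d
  rw [mul_one_sub, map_sub, show returnSeriesZ * (X 0 * X 2 * catalanX2) =
    returnSeriesZ * catalanX2 * (X 0 * X 2) by ring, coeff_mul_X_mul_X _ (by decide),
    coeff_mul_catalanX2, coeff_returnSeriesZ, coeff_catalanX2]
  simp only [coeff_returnSeriesZ, Finsupp.tsub_apply, Finsupp.single_apply, Fin.reduceEq,
    if_false, if_true, tsub_zero]
  generalize d 0 = i, d 1 = a, d 2 = b
  rcases a with _ | a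
  · rcases b with _ | b
    · simp
    rcases i with _ | i
    · simp [pathCount_zero]
    · simp [pathCount_succ_succ_zero_eq_sum, mul_comm]
  · simp

theorem constantCoeff_catalanX2 : constantCoeff catalanX2 = 1 := by
  rw [← coeff_zero_eq_constantCoeff_apply, coeff_catalanX2]
  simp [pathCount_zero]

open MvPowerSeries in
/-- `G(x,y,z) = F(x,y)·F(x,z)/(c(x²)·(1 − yz))`. -/
theorem Ggf_eq :
    Ggf = Fxy * Fxz * (catalanX2 * (1 - X 1 * X 2))⁻¹ := by
  have hunit (s t : Fin 3) : constantCoeff (1 - X s * X t * catalanX2) ≠ 0 := by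
    simp [constantCoeff_catalanX2]
  have hGgf : Ggf * (1 - X 1 * X 2) =
      catalanX2 * (1 - X 0 * X 1 * catalanX2)⁻¹ * (1 - X 0 * X 2 * catalanX2)⁻¹ := by
    rw [MvPowerSeries.eq_mul_inv_iff_mul_eq (hunit 0 2),
      MvPowerSeries.eq_mul_inv_iff_mul_eq (hunit 0 1), mul_right_comm,
      Ggf_mul_one_sub_X_mul_X, returnSeriesYZ_mul_one_sub, returnSeriesZ_mul_one_sub]
  rw [MvPowerSeries.eq_mul_inv_iff_mul_eq (by simp [constantCoeff_catalanX2]), Fxy, Fxz]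
  linear_combination catalanX2 * hGgf
end
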